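/- arXiv:2211.06087 — 2 statements merged into one kernel-verified Lean document; each statement's English description precedes it below -/
import Mathlib

section
/- Let k ≥ 3 and t ≥ 2. Let ℐ_n denote the order-k dimension-n unit tensor (δ_{i_1⋯i_k} = 1 if all indices equal, 0 otherwise). Let n = 2t and Q = [[I_t - (1/t)J_t, (1/t)J_t], [(1/t)J_t, I_t - (1/t)J_t]]. Then Q ℐ_n Qᵀ ≠ ℐ_n, where (Q𝒜Qᵀ)_{i_1⋯i_k} = Σ_{j_1,…,j_k} a_{j_1⋯j_k} ∏_s q_{i_s j_s}. -/
open Matrix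

/-- For k ≥ 3 and t ≥ 2, conjugating the order-k unit tensor by the switching matrix
Q = [[I-(1/t)J,(1/t)J],[(1/t)J,I-(1/t)J]] does not fix it. -/
theorem unit_tensor_not_fixed (k t : ℕ) (hk : 3 ≤ k) (ht : 2 ≤ t)
    (J : Matrix (Fin t) (Fin t) ℝ) (hJ : ∀ i j, J i j = 1)
    (Q : Matrix (Fin t ⊕ Fin t) (Fin t ⊕ Fin t) ℝ)
    (hQ : Q = fromBlocks (1 - (t : ℝ)⁻¹ • J) ((t : ℝ)⁻¹ • J)
                         ((t : ℝ)⁻¹ • J) (1 - (t : ℝ)⁻¹ • J))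
    (I : (Fin k → Fin t ⊕ Fin t) → ℝ)
    (hI : ∀ i, I i = if ∃ v, ∀ s, i s = v then (1 : ℝ) else 0)
    (C : (Fin k → Fin t ⊕ Fin t) → ℝ)
    (hC : ∀ i, C i = ∑ j : Fin k → Fin t ⊕ Fin t, I j * ∏ s, Q (i s) (j s)) :
    C ≠ I := by
  intro hCI
  have ht0 : (0:ℝ) < t := by positivity
  set x : ℝ := (t : ℝ)⁻¹ with hxdef
  have hx0 : 0 < x := by positivity
  have hx2 : x ≤ 1/2 := by
    rw [hxdef]
    rw [inv_le_comm₀ (by positivity) (by norm_num)]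
    norm_num
    exact_mod_cast ht
  have hk0 : 0 < k := by omega
  have z0 : Fin t := ⟨0, by omega⟩
  let i₀ : Fin k → Fin t ⊕ Fin t := fun _ => Sum.inl z0
  have hI0 : I i₀ = 1 := by
    rw [hI]; exact if_pos ⟨Sum.inl z0, fun s => rfl⟩
  -- C i₀ as a sum over constant tensors
  have hCsum : C i₀ = ∑ v : Fin t ⊕ Fin t, (Q (Sum.inl z0) v)^k := by
    rw [hC]
    have : ∀ j : Fin k → Fin t ⊕ Fin t,
        I j * ∏ s, Q (i₀ s) (j s)
          = if ∃ v, ∀ s, j s = v then ∏ s, Q (Sum.inl z0) (j s) else 0 := by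
      intro j
      rw [hI]
      split <;> simp [i₀]
    rw [Finset.sum_congr rfl (fun j _ => this j), Finset.sum_ite, Finset.sum_const_zero,
      add_zero]
    have himg : Finset.univ.filter (fun j : Fin k → Fin t ⊕ Fin t => ∃ v, ∀ s, j s = v)
        = Finset.univ.image (fun v : Fin t ⊕ Fin t => (fun _ : Fin k => v)) := by
      ext j
      simp only [Finset.mem_filter, Finset.mem_univ, true_and, Finset.mem_image]
      constructor
      · rintro ⟨v, hv⟩; exact ⟨v, (funext fun s => (hv s)).symm⟩
      · rintro ⟨v, hv⟩; exact ⟨v, fun s => by rw [← hv]⟩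
    rw [himg, Finset.sum_image (by
      intro a _ b _ h
      exact congrFun h ⟨0, hk0⟩)]
    refine Finset.sum_congr rfl fun v _ => ?_
    simp [Finset.prod_const]
  -- compute entries of Q
  have hQl : ∀ a : Fin t, Q (Sum.inl z0) (Sum.inl a) = (if z0 = a then 1 else 0) - x := by
    intro a; rw [hQ]; simp [fromBlocks, Matrix.one_apply, hJ]
  have hQr : ∀ a : Fin t, Q (Sum.inl z0) (Sum.inr a) = x := by
    intro a; rw [hQ]; simp [fromBlocks, hJ]
  have hval : C i₀ = (1 - x)^k + ((t:ℝ) - 1) * (-x)^k + t * x^k := by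
    rw [hCsum, Fintype.sum_sum_type]
    have h1 : ∑ a : Fin t, (Q (Sum.inl z0) (Sum.inl a))^k
        = (1 - x)^k + ((t:ℝ) - 1) * (-x)^k := by
      rw [Finset.sum_congr rfl (fun a _ => by rw [hQl a])]
      rw [← Finset.add_sum_erase _ _ (Finset.mem_univ z0)]
      simp only [if_pos rfl]
      congr 1
      rw [Finset.sum_congr rfl (fun a ha => by
        rw [if_neg (Finset.ne_of_mem_erase ha).symm, zero_sub])]
      rw [Finset.sum_const, Finset.card_erase_of_mem (Finset.mem_univ z0)]
      simp [nsmul_eq_mul]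
      left
      rw [Nat.cast_sub (by omega)]
      push_cast
      ring
    have h2 : ∑ a : Fin t, (Q (Sum.inl z0) (Sum.inr a))^k = (t:ℝ) * x^k := by
      rw [Finset.sum_congr rfl (fun a _ => by rw [hQr a])]
      simp [Finset.card_fin, nsmul_eq_mul]
    rw [h1, h2]
  -- final inequality: value < 1
  have hlt : C i₀ < 1 := by
    rw [hval]
    have htx : (t:ℝ) * x = 1 := by
      rw [hxdef]; field_simp
    have hb1 : (1 - x)^k ≤ (1 - x)^2 := by
      apply pow_le_pow_of_le_one (by linarith) (by linarith) (by omega)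
    have hb2 : ((t:ℝ) - 1) * (-x)^k ≤ (t:ℝ) * x^k := by
      calc ((t:ℝ) - 1) * (-x)^k ≤ ((t:ℝ) - 1) * x^k := by
            apply mul_le_mul_of_nonneg_left _ (by linarith [show (2:ℝ) ≤ t from by exact_mod_cast ht])
            calc (-x)^k ≤ |(-x)^k| := le_abs_self _
              _ = x^k := by rw [abs_pow, abs_neg, abs_of_pos hx0]
        _ ≤ (t:ℝ) * x^k := by nlinarith [pow_pos hx0 k]
    have hb3 : (t:ℝ) * x^k ≤ x^2 := by
      have : (t:ℝ) * x^k = x^(k-1) := by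
        have : x^k = x * x^(k-1) := by
          rw [← pow_succ']
          congr 1; omega
        rw [this, ← mul_assoc, htx, one_mul]
      rw [this]
      apply pow_le_pow_of_le_one (le_of_lt hx0) (by linarith) (by omega)
    nlinarith [hb1, hb2, hb3]
  rw [hCI] at hlt
  rw [hI0] at hlt
  exact lt_irrefl 1 hlt
end

section
/- Let G be a k-uniform hypergraph with vertex partition V = C_1 ∪ C_2 ∪ D, |C_1| = |C_2| = t, in which every edge has at most one vertex in C_1 ∪ C_2, and for every (k-1)-subset S of D, the neighbourhood Γ(S) ∩ (C_1 ∪ C_2) is either C_1, or C_2, or satisfies |Γ(S) ∩ C_1| = |Γ(S) ∩ C_2|. Let H be obtained from G by, for each (k-1)-subset S of D with Γ(S) ∩ (C_1 ∪ C_2) ∈ {C_1, C_2}, switching the adjacency between S and every vertex of C_1 ∪ C_2. Then 𝒜_H = Q 𝒜_G Qᵀ where Q = [[I_t - (1/t)J_t, (1/t)J_t, 0],[(1/t)J_t, I_t - (1/t)J_t, 0],[0,0,I_{n-2t}]] and (Q𝒜Qᵀ)_{i_1⋯i_k} = Σ_{j_1,…,j_k} a_{j_1⋯j_k} ∏_s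 q_{i_s j_s}. -/
/-!
Conjugation by `Q = P ⊕ I` fixes the coordinates in `D` and mixes only those in `C₁ ∪ C₂`.
Since every edge of `G`, and hence of `H`, meets `C₁ ∪ C₂` at most once, both tensors vanish
off the injective tuples with at most one coordinate in `C₁ ∪ C₂`, and so does `Q 𝒜_G Qᵀ`.
A tuple inside `D` is fixed by `Q`, and no such edge is switched. For a tuple with one coordinate
`x ∈ C₁ ∪ C₂` and the others forming `S ⊆ D`, the entry of `Q 𝒜_G Qᵀ` is `(P g)(x)`, where `g`
is the indicator of `Γ(S)` on `C₁ ∪ C₂`. Now `P g = g - (c₁ - c₂)/t · (𝟙_{C₁} - 𝟙_{C₂})` with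
`cᵢ = |Γ(S) ∩ Cᵢ|`: this is `g` in the balanced case, and it exchanges `𝟙_{C₁}` and `𝟙_{C₂}`,
which is exactly the switching.
-/

open Matrix Finset

/-- `(Q 𝒜 Qᵀ)_{i₁⋯iₖ} = ∑_{j₁,…,jₖ} 𝒜_{j₁⋯jₖ} ∏ₛ Q_{iₛ jₛ}`. -/
def conjTensor {ι n R : Type*} [Fintype ι] [DecidableEq ι] [Fintype n] [CommSemiring R]
    (Q : Matrix n n R) (A : (ι → n) → R) (i : ι → n) : R :=
  ∑ j : ι → n, A j * ∏ s, Q (i s) (j s)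

theorem forall_isRight_or_exists_isLeft {ι α β : Type*} {i : ι → α ⊕ β}
    (hi : {s | (i s).isLeft}.Subsingleton) :
    (∀ s, (i s).isRight) ∨ ∃ s₀ x, i s₀ = Sum.inl x ∧ ∀ s ≠ s₀, (i s).isRight := by
  by_cases h : ∃ s₀ x, i s₀ = Sum.inl x
  · obtain ⟨s₀, x, hx⟩ := h
    refine Or.inr ⟨s₀, x, hx, fun s hs => ?_⟩
    by_contra hs'
    exact hs (hi (by simpa using hs') (by simp [hx]))
  · simp only [not_exists] at h
    exact Or.inl fun s => by cases hs : i s <;> simp_all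

section BlockDiagonal

variable {ι α β R : Type*} [DecidableEq β] [CommSemiring R] {P : Matrix α α R}

theorem isLeft_of_fromBlocks_apply_ne_zero {a : α} {v : α ⊕ β}
    (h : fromBlocks P 0 0 (1 : Matrix β β R) (Sum.inl a) v ≠ 0) : v.isLeft := by
  cases v <;> simp_all

theorem eq_of_fromBlocks_apply_ne_zero {b : β} {v : α ⊕ β}
    (h : fromBlocks P 0 0 (1 : Matrix β β R) (Sum.inr b) v ≠ 0) : v = Sum.inr b := by
  cases v <;> simp_all [one_apply, eq_comm]

variable [Fintype ι] [DecidableEq ι] [Fintype α] [Fintype β] {A : (ι → α ⊕ β) → R}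
  {i : ι → α ⊕ β}

theorem conjTensor_fromBlocks_eq_zero
    (hA : ∀ j, A j ≠ 0 → Function.Injective j ∧ {s | (j s).isLeft}.Subsingleton)
    (hi : ¬ (Function.Injective i ∧ {s | (i s).isLeft}.Subsingleton)) :
    conjTensor (fromBlocks P 0 0 1) A i = 0 := by
  refine sum_eq_zero fun j _ => ?_
  by_contra hj
  obtain ⟨hAj, hQ⟩ := ne_zero_and_ne_zero_of_mul hj
  replace hQ s : fromBlocks P 0 0 1 (i s) (j s) ≠ 0 := fun h => hQ (prod_eq_zero (mem_univ s) h)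
  -- so `j` agrees with `i` on the coordinates in `β` and is in `α` wherever `i` is
  obtain ⟨hjinj, hjleft⟩ := hA j hAj
  have hleft : {s | (i s).isLeft}.Subsingleton := fun s hs s' hs' => by
    obtain ⟨a, ha⟩ := Sum.isLeft_iff.1 hs
    obtain ⟨a', ha'⟩ := Sum.isLeft_iff.1 hs'
    exact hjleft (isLeft_of_fromBlocks_apply_ne_zero (ha ▸ hQ s))
      (isLeft_of_fromBlocks_apply_ne_zero (ha' ▸ hQ s'))
  refine hi ⟨fun s s' hss' => ?_, hleft⟩
  rcases hv : i s with a | b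
  · exact hleft (by simp [hv]) (by simp [← hss', hv])
  · have hs := hQ s
    have hs' := hQ s'
    rw [hv] at hs
    rw [← hss', hv] at hs'
    exact hjinj
      ((eq_of_fromBlocks_apply_ne_zero hs).trans (eq_of_fromBlocks_apply_ne_zero hs').symm)

theorem conjTensor_fromBlocks_of_forall_isRight (hi : ∀ s, (i s).isRight) :
    conjTensor (fromBlocks P 0 0 1) A i = A i := by
  rw [conjTensor, Fintype.sum_eq_single i fun j hj => ?_]
  · rw [Fintype.prod_eq_one _ fun s => ?_, mul_one]
    obtain ⟨b, hb⟩ := Sum.isRight_iff.1 (hi s)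
    simp [hb]
  obtain ⟨s, hs⟩ := Function.ne_iff.1 hj
  obtain ⟨b, hb⟩ := Sum.isRight_iff.1 (hi s)
  refine mul_eq_zero_of_right _ (prod_eq_zero (mem_univ s) ?_)
  by_contra hQ
  rw [hb] at hQ
  exact hs ((eq_of_fromBlocks_apply_ne_zero hQ).trans hb.symm)

theorem conjTensor_fromBlocks_of_isRight_of_ne {s₀ : ι} {x : α} (hx : i s₀ = Sum.inl x)
    (hi : ∀ s ≠ s₀, (i s).isRight) :
    conjTensor (fromBlocks P 0 0 1) A i =
      (P *ᵥ fun y => A (Function.update i s₀ (Sum.inl y))) x := by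
  rw [conjTensor]
  refine (Fintype.sum_of_injective (fun y => Function.update i s₀ (Sum.inl y))
    (fun y y' h => by simpa using congr_fun h s₀) _ _ ?_ fun y => ?_).symm
  · rintro j hj
    by_contra hj'
    replace hQ s : fromBlocks P 0 0 1 (i s) (j s) ≠ 0 :=
      fun h => hj' (mul_eq_zero_of_right _ (prod_eq_zero (mem_univ s) h))
    have hQ₀ := hQ s₀
    rw [hx] at hQ₀
    refine hj ⟨(j s₀).getLeft (isLeft_of_fromBlocks_apply_ne_zero hQ₀), funext fun s => ?_⟩
    rcases eq_or_ne s s₀ with rfl | hs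
    · simp
    · obtain ⟨b, hb⟩ := Sum.isRight_iff.1 (hi s hs)
      have hQs := hQ s
      rw [hb] at hQs
      simp [Function.update_of_ne hs, hb, eq_of_fromBlocks_apply_ne_zero hQs]
  · rw [Fintype.prod_eq_single s₀ fun s hs => ?_]
    · simp [hx, mul_comm]
    · obtain ⟨b, hb⟩ := Sum.isRight_iff.1 (hi s hs)
      simp [Function.update_of_ne hs, hb]

end BlockDiagonal

/-- The `2t × 2t` block `[[I - J/t, J/t], [J/t, I - J/t]]` of the switching matrix `Q`. -/
def switchMatrix (K : Type*) [Field K] (t : ℕ) : Matrix (Fin t ⊕ Fin t) (Fin t ⊕ Fin t) K :=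
  fromBlocks (1 - (t : K)⁻¹ • of fun _ _ => 1) ((t : K)⁻¹ • of fun _ _ => 1)
    ((t : K)⁻¹ • of fun _ _ => 1) (1 - (t : K)⁻¹ • of fun _ _ => 1)

section SwitchMatrix

variable {K : Type*} [Field K] {t : ℕ}

theorem switchMatrix_mulVec (g : Fin t ⊕ Fin t → K) :
    switchMatrix K t *ᵥ g =
      g - ((t : K)⁻¹ * (∑ a, g (Sum.inl a) - ∑ a, g (Sum.inr a))) •
        Sum.elim (fun _ => 1) (fun _ => -1) := by
  ext (a | a) <;>
    simp [switchMatrix, mulVec, dotProduct, Fintype.sum_sum_type, sub_mul, one_apply,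
      ← mul_sum] <;> ring

theorem switchMatrix_mulVec_of_sum_eq {g : Fin t ⊕ Fin t → K}
    (hg : ∑ a, g (Sum.inl a) = ∑ a, g (Sum.inr a)) : switchMatrix K t *ᵥ g = g := by
  simp [switchMatrix_mulVec, hg]

variable [CharZero K]

theorem switchMatrix_mulVec_elim_const_zero (ht : t ≠ 0) (w : K) :
    switchMatrix K t *ᵥ Sum.elim (fun _ => w) (fun _ => 0) =
      Sum.elim (fun _ => 0) (fun _ => w) := by
  ext (a | a) <;> simp [switchMatrix_mulVec, ht]

theorem switchMatrix_mulVec_elim_zero_const (ht : t ≠ 0) (w : K) :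
    switchMatrix K t *ᵥ Sum.elim (fun _ => 0) (fun _ => w) =
      Sum.elim (fun _ => w) (fun _ => 0) := by
  ext (a | a) <;> simp [switchMatrix_mulVec, ht]

theorem switchMatrix_mulVec_indicator (ht : t ≠ 0) {p : Fin t ⊕ Fin t → Prop} [DecidablePred p]
    (hp : (∀ y, p y ↔ y.isLeft) ∨ (∀ y, p y ↔ y.isRight) ∨
      #{a | p (Sum.inl a)} = #{a | p (Sum.inr a)}) (w : K) :
    switchMatrix K t *ᵥ (fun y => if p y then w else 0) =
      fun y => if Xor (p y) ((∀ y, p y ↔ y.isLeft) ∨ (∀ y, p y ↔ y.isRight)) then w else 0 := by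
  by_cases hsw : (∀ y, p y ↔ y.isLeft) ∨ (∀ y, p y ↔ y.isRight)
  · simp only [xor_iff_iff_not, hsw, not_true_eq_false, iff_false]
    rcases hsw with h | h
    · have hg : (fun y => if p y then w else 0) = Sum.elim (fun _ => w) (fun _ => 0) := by
        ext (a | a) <;> simp [h]
      rw [hg, switchMatrix_mulVec_elim_const_zero ht]
      ext (a | a) <;> simp [h]
    · have hg : (fun y => if p y then w else 0) = Sum.elim (fun _ => 0) (fun _ => w) := by
        ext (a | a) <;> simp [h]
      rw [hg, switchMatrix_mulVec_elim_zero_const ht]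
      ext (a | a) <;> simp [h]
  · simp only [xor_iff_iff_not, hsw, not_false_eq_true, iff_true]
    refine switchMatrix_mulVec_of_sum_eq ?_
    have hcard := (hp.resolve_left fun h => hsw (Or.inl h)).resolve_left fun h => hsw (Or.inr h)
    simp [sum_ite, hcard]

section Switching

variable {V : Type*} [DecidableEq V] {G H : Finset (Finset V)} {C D : Finset V}
  {Sw sw : Finset V → Prop} {m : ℕ}

theorem inter_eq_singleton_of_switch
    (hSw : ∀ e, Sw e ↔ ∃ v ∈ C, ∃ S ⊆ D, S.card = m ∧ e = insert v S ∧ sw S)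
    (hCD : Disjoint C D) {e : Finset V} (he : Sw e) : ∃ v, e ∩ C = {v} := by
  obtain ⟨v, hv, S, hSD, -, rfl, -⟩ := (hSw e).1 he
  refine ⟨v, ?_⟩
  rw [insert_inter_of_mem hv, disjoint_iff_inter_eq_empty.1 (hCD.symm.mono_left hSD)]
  rfl

theorem card_inter_le_one_of_switch
    (hSw : ∀ e, Sw e ↔ ∃ v ∈ C, ∃ S ⊆ D, S.card = m ∧ e = insert v S ∧ sw S)
    (hH : ∀ e, e ∈ H ↔ ((e ∈ G ∧ ¬ Sw e) ∨ (e ∉ G ∧ Sw e)))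
    (hCD : Disjoint C D) (hG : ∀ e ∈ G, (e ∩ C).card ≤ 1) : ∀ e ∈ H, (e ∩ C).card ≤ 1 := by
  intro e he
  rcases (hH e).1 he with ⟨heG, -⟩ | ⟨-, hsw⟩
  · exact hG e heG
  · obtain ⟨v, hv⟩ := inter_eq_singleton_of_switch hSw hCD hsw
    simp [hv]

theorem mem_switch_iff_of_inter_eq_empty
    (hSw : ∀ e, Sw e ↔ ∃ v ∈ C, ∃ S ⊆ D, S.card = m ∧ e = insert v S ∧ sw S)
    (hH : ∀ e, e ∈ H ↔ ((e ∈ G ∧ ¬ Sw e) ∨ (e ∉ G ∧ Sw e)))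
    (hCD : Disjoint C D) {e : Finset V} (he : e ∩ C = ∅) : e ∈ H ↔ e ∈ G := by
  have hsw : ¬ Sw e := fun hsw => by
    obtain ⟨v, hv⟩ := inter_eq_singleton_of_switch hSw hCD hsw
    simp [he] at hv
  simp [hH, hsw]

theorem insert_mem_switch_iff
    (hSw : ∀ e, Sw e ↔ ∃ v ∈ C, ∃ S ⊆ D, S.card = m ∧ e = insert v S ∧ sw S)
    (hH : ∀ e, e ∈ H ↔ ((e ∈ G ∧ ¬ Sw e) ∨ (e ∉ G ∧ Sw e)))
    (hCD : Disjoint C D) {v : V} (hv : v ∈ C) {S : Finset V} (hSD : S ⊆ D) (hS : S.card = m) :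
    insert v S ∈ H ↔ Xor (insert v S ∈ G) (sw S) := by
  have hinter {v S} (hv : v ∈ C) (hSD : S ⊆ D) : insert v S ∩ D = S := by
    rw [insert_inter_of_notMem (hCD.notMem_of_mem_left_finset hv), inter_eq_left.2 hSD]
  have hsw : Sw (insert v S) ↔ sw S := by
    refine (hSw _).trans ⟨?_, fun h => ⟨v, hv, S, hSD, hS, rfl, h⟩⟩
    rintro ⟨v', hv', S', hS'D, -, he, h⟩
    rwa [← hinter hv hSD, he, hinter hv' hS'D]
  rw [hH, hsw, xor_def]
  tauto

end Switching

/-- The hypergraph's adjacency tensor with weight `w` (the paper takes `w = 1/(k-1)!`). -/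
def adjTensor {ι V R : Type*} [Fintype ι] [DecidableEq ι] [DecidableEq V] [Zero R]
    (E : Finset (Finset V)) (w : R) (i : ι → V) : R :=
  if Function.Injective i ∧ univ.image i ∈ E then w else 0

section AdjTensor

variable {ι γ β R : Type*} [Fintype ι] [DecidableEq ι] [DecidableEq γ] [DecidableEq β] [Zero R]
  {E : Finset (Finset (γ ⊕ β))} {w : R}

theorem injective_and_subsingleton_of_adjTensor_ne_zero {C : Finset (γ ⊕ β)}
    (hC : ∀ v, v ∈ C ↔ v.isLeft) (hE : ∀ e ∈ E, (e ∩ C).card ≤ 1) {j : ι → γ ⊕ β}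
    (h : adjTensor E w j ≠ 0) : Function.Injective j ∧ {s | (j s).isLeft}.Subsingleton := by
  rw [adjTensor, ite_ne_right_iff] at h
  refine ⟨h.1.1, fun s hs s' hs' => h.1.1 (by_contra fun hne => ?_)⟩
  exact (hE _ h.1.2).not_gt (one_lt_card.2 ⟨j s, mem_inter.2 ⟨mem_image_of_mem _ (mem_univ _),
    (hC _).2 hs⟩, j s', mem_inter.2 ⟨mem_image_of_mem _ (mem_univ _), (hC _).2 hs'⟩, hne⟩)

theorem adjTensor_update_inl {i : ι → γ ⊕ β} (hinj : Function.Injective i) {s₀ : ι}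
    (hi : ∀ s ≠ s₀, (i s).isRight) (y : γ) :
    adjTensor E w (Function.update i s₀ (Sum.inl y)) =
      if insert (Sum.inl y) ((univ.erase s₀).image i) ∈ E then w else 0 := by
  have himage : univ.image (Function.update i s₀ (Sum.inl y)) =
      insert (Sum.inl y) ((univ.erase s₀).image i) := by
    conv_lhs => rw [← insert_erase (mem_univ s₀)]
    rw [image_insert, Function.update_self,
      image_congr fun s hs => Function.update_of_ne (ne_of_mem_erase hs) _ _]
  have hupd : Function.Injective (Function.update i s₀ (Sum.inl y)) := by
    intro s s' h
    by_cases hs : s = s₀ <;> by_cases hs' : s' = s₀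
    · rw [hs, hs']
    · rw [hs, Function.update_self, Function.update_of_ne hs'] at h
      simpa [← h] using hi s' hs'
    · rw [hs', Function.update_self, Function.update_of_ne hs] at h
      simpa [h] using hi s hs
    · simpa [Function.update_of_ne, hs, hs', hinj.eq_iff] using h
  simp [adjTensor, hupd, himage]

variable {G H : Finset (Finset (γ ⊕ β))} {C D : Finset (γ ⊕ β)} {Sw sw : Finset (γ ⊕ β) → Prop}
  {m : ℕ}

theorem adjTensor_switch_of_forall_isRight
    (hSw : ∀ e, Sw e ↔ ∃ v ∈ C, ∃ S ⊆ D, S.card = m ∧ e = insert v S ∧ sw S)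
    (hH : ∀ e, e ∈ H ↔ ((e ∈ G ∧ ¬ Sw e) ∨ (e ∉ G ∧ Sw e)))
    (hCD : Disjoint C D) (hC : ∀ v, v ∈ C ↔ v.isLeft) {i : ι → γ ⊕ β}
    (hi : ∀ s, (i s).isRight) : adjTensor H w i = adjTensor G w i := by
  have hiC : univ.image i ∩ C = ∅ := by
    refine eq_empty_of_forall_notMem fun v hv => ?_
    obtain ⟨hvi, hvC⟩ := mem_inter.1 hv
    obtain ⟨s, -, rfl⟩ := mem_image.1 hvi
    obtain ⟨b, hb⟩ := Sum.isRight_iff.1 (hi s)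
    simpa [hb] using (hC _).1 hvC
  simp only [adjTensor, mem_switch_iff_of_inter_eq_empty hSw hH hCD hiC]

theorem image_erase_subset {i : ι → γ ⊕ β} {s₀ : ι} (hD : ∀ v, v ∈ D ↔ v.isRight)
    (hi : ∀ s ≠ s₀, (i s).isRight) : (univ.erase s₀).image i ⊆ D := fun v hv => by
  obtain ⟨s, hs, rfl⟩ := mem_image.1 hv
  exact (hD _).2 (hi s (ne_of_mem_erase hs))

theorem adjTensor_switch_update_inl [DecidablePred sw]
    (hSw : ∀ e, Sw e ↔ ∃ v ∈ C, ∃ S ⊆ D, S.card = m ∧ e = insert v S ∧ sw S)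
    (hH : ∀ e, e ∈ H ↔ ((e ∈ G ∧ ¬ Sw e) ∨ (e ∉ G ∧ Sw e)))
    (hCD : Disjoint C D) (hC : ∀ v, v ∈ C ↔ v.isLeft) (hD : ∀ v, v ∈ D ↔ v.isRight)
    (hm : Fintype.card ι - 1 = m) {i : ι → γ ⊕ β} (hinj : Function.Injective i) {s₀ : ι}
    (hi : ∀ s ≠ s₀, (i s).isRight) (y : γ) :
    adjTensor H w (Function.update i s₀ (Sum.inl y)) =
      if Xor (insert (Sum.inl y) ((univ.erase s₀).image i) ∈ G) (sw ((univ.erase s₀).image i))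
      then w else 0 := by
  have hS : ((univ.erase s₀).image i).card = m := by
    rw [card_image_of_injective _ hinj, card_erase_of_mem (mem_univ _), card_univ, hm]
  simp only [adjTensor_update_inl hinj hi,
    insert_mem_switch_iff hSw hH hCD ((hC (Sum.inl y)).2 rfl) (image_erase_subset hD hi) hS]

end AdjTensor

theorem card_inter_image {ι V : Type*} [Fintype ι] [DecidableEq V] (N : Finset V) {f : ι → V}
    (hf : Function.Injective f) : #(N ∩ univ.image f) = #{a | f a ∈ N} := by
  rw [inter_comm, ← filter_mem_eq_inter, filter_image, card_image_of_injective _ hf]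

section Neighbourhood

variable {α β : Type*} [Fintype α] [DecidableEq α] [DecidableEq β] {C₁ C₂ N : Finset ((α ⊕ α) ⊕ β)}

theorem inter_union_eq_left_iff
    (hC₁ : C₁ = univ.image fun a : α => (Sum.inl (Sum.inl a) : (α ⊕ α) ⊕ β))
    (hC₂ : C₂ = univ.image fun a : α => (Sum.inl (Sum.inr a) : (α ⊕ α) ⊕ β)) :
    N ∩ (C₁ ∪ C₂) = C₁ ↔ ∀ y, Sum.inl y ∈ N ↔ y.isLeft := by
  subst hC₁ hC₂
  simp only [Finset.ext_iff, mem_inter, mem_union, mem_image, mem_univ, true_and]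
  constructor
  · rintro h (a | a)
    · simpa using h (Sum.inl (Sum.inl a))
    · simpa using h (Sum.inl (Sum.inr a))
  · rintro h ((a | a) | b) <;> simp [h]

theorem inter_union_eq_right_iff
    (hC₁ : C₁ = univ.image fun a : α => (Sum.inl (Sum.inl a) : (α ⊕ α) ⊕ β))
    (hC₂ : C₂ = univ.image fun a : α => (Sum.inl (Sum.inr a) : (α ⊕ α) ⊕ β)) :
    N ∩ (C₁ ∪ C₂) = C₂ ↔ ∀ y, Sum.inl y ∈ N ↔ y.isRight := by
  subst hC₁ hC₂
  simp only [Finset.ext_iff, mem_inter, mem_union, mem_image, mem_univ, true_and]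
  constructor
  · rintro h (a | a)
    · simpa using h (Sum.inl (Sum.inl a))
    · simpa using h (Sum.inl (Sum.inr a))
  · rintro h ((a | a) | b) <;> simp [h]

end Neighbourhood

theorem switchMatrix_mulVec_indicator_mem {K β : Type*} [Field K] [CharZero K] [DecidableEq β]
    {t : ℕ} (ht : t ≠ 0) {C₁ C₂ N : Finset ((Fin t ⊕ Fin t) ⊕ β)}
    (hC₁ : C₁ = univ.image fun a : Fin t => (Sum.inl (Sum.inl a) : (Fin t ⊕ Fin t) ⊕ β))
    (hC₂ : C₂ = univ.image fun a : Fin t => (Sum.inl (Sum.inr a) : (Fin t ⊕ Fin t) ⊕ β))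
    (hN : N ∩ (C₁ ∪ C₂) = C₁ ∨ N ∩ (C₁ ∪ C₂) = C₂ ∨ (N ∩ C₁).card = (N ∩ C₂).card) (w : K) :
    switchMatrix K t *ᵥ (fun y => if Sum.inl y ∈ N then w else 0) =
      fun y => if Xor (Sum.inl y ∈ N) (N ∩ (C₁ ∪ C₂) = C₁ ∨ N ∩ (C₁ ∪ C₂) = C₂) then w else 0 := by
  simp only [inter_union_eq_left_iff hC₁ hC₂, inter_union_eq_right_iff hC₁ hC₂] at hN ⊢
  rw [hC₁, hC₂, card_inter_image _ fun a b h => by simpa using h,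
    card_inter_image _ fun a b h => by simpa using h] at hN
  exact switchMatrix_mulVec_indicator ht hN w

theorem EWQH_switching_general (k t d : ℕ) (ht : 1 ≤ t)
    (G H : Finset (Finset ((Fin t ⊕ Fin t) ⊕ Fin d)))
    (C₁ C₂ D : Finset ((Fin t ⊕ Fin t) ⊕ Fin d))
    (hC₁ : C₁ = Finset.univ.image
      (fun a : Fin t => (Sum.inl (Sum.inl a) : (Fin t ⊕ Fin t) ⊕ Fin d)))
    (hC₂ : C₂ = Finset.univ.image
      (fun a : Fin t => (Sum.inl (Sum.inr a) : (Fin t ⊕ Fin t) ⊕ Fin d)))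
    (hD : D = Finset.univ.image
      (fun b : Fin d => (Sum.inr b : (Fin t ⊕ Fin t) ⊕ Fin d)))
    -- every edge has at most one vertex in C₁ ∪ C₂
    (hG1 : ∀ e ∈ G, (e ∩ (C₁ ∪ C₂)).card ≤ 1)
    -- N S is the neighbourhood Γ(S) in G
    (N : Finset ((Fin t ⊕ Fin t) ⊕ Fin d) → Finset ((Fin t ⊕ Fin t) ⊕ Fin d))
    (hN : ∀ S, N S = Finset.univ.filter (fun u => u ∉ S ∧ insert u S ∈ G))
    -- neighbourhood condition for (k-1)-subsets of D
    (hG2 : ∀ S ⊆ D, S.card = k - 1 →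
      (N S ∩ (C₁ ∪ C₂) = C₁ ∨ N S ∩ (C₁ ∪ C₂) = C₂ ∨
        (N S ∩ C₁).card = (N S ∩ C₂).card))
    -- Sw e: the k-set e is one whose adjacency is switched
    (Sw : Finset ((Fin t ⊕ Fin t) ⊕ Fin d) → Prop)
    (hSw : ∀ e, Sw e ↔ ∃ v ∈ C₁ ∪ C₂, ∃ S ⊆ D, S.card = k - 1 ∧ e = insert v S ∧
      (N S ∩ (C₁ ∪ C₂) = C₁ ∨ N S ∩ (C₁ ∪ C₂) = C₂))
    -- H is obtained from G by the switching
    (hH : ∀ e, e ∈ H ↔ ((e ∈ G ∧ ¬ Sw e) ∨ (e ∉ G ∧ Sw e)))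
    (J : Matrix (Fin t) (Fin t) ℝ) (hJ : ∀ a b, J a b = 1)
    (Q : Matrix ((Fin t ⊕ Fin t) ⊕ Fin d) ((Fin t ⊕ Fin t) ⊕ Fin d) ℝ)
    (hQ : Q = fromBlocks
      (fromBlocks (1 - (t : ℝ)⁻¹ • J) ((t : ℝ)⁻¹ • J) ((t : ℝ)⁻¹ • J) (1 - (t : ℝ)⁻¹ • J))
      0 0 1)
    -- adjacency tensors of G and H
    (AG AH : (Fin k → (Fin t ⊕ Fin t) ⊕ Fin d) → ℝ)
    (hAG : ∀ i, AG i = if Function.Injective i ∧ Finset.image i Finset.univ ∈ G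
      then (1 : ℝ) / (Nat.factorial (k - 1)) else 0)
    (hAH : ∀ i, AH i = if Function.Injective i ∧ Finset.image i Finset.univ ∈ H
      then (1 : ℝ) / (Nat.factorial (k - 1)) else 0) :
    ∀ i : Fin k → (Fin t ⊕ Fin t) ⊕ Fin d,
      AH i = ∑ j : Fin k → (Fin t ⊕ Fin t) ⊕ Fin d, AG j * ∏ s, Q (i s) (j s) := by
  set w : ℝ := 1 / (Nat.factorial (k - 1))
  obtain rfl : AG = adjTensor G w := funext hAG
  obtain rfl : AH = adjTensor H w := funext hAH
  obtain rfl : Q = fromBlocks (switchMatrix ℝ t) 0 0 1 := by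
    rw [hQ, show J = of fun _ _ => 1 from ext hJ]; rfl
  have hC v : v ∈ C₁ ∪ C₂ ↔ v.isLeft := by subst hC₁ hC₂; rcases v with (a | a) | b <;> simp
  have hDr v : v ∈ D ↔ v.isRight := by subst hD; rcases v with (a | a) | b <;> simp
  have hCD : Disjoint (C₁ ∪ C₂) D := disjoint_left.2 fun v hv hv' => by
    rcases v with a | b <;> simp_all
  have hHC := card_inter_le_one_of_switch hSw hH hCD hG1
  intro i
  by_cases hadm : Function.Injective i ∧ {s | (i s).isLeft}.Subsingleton
  swap
  · rw [← conjTensor, conjTensor_fromBlocks_eq_zero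
      (fun j => injective_and_subsingleton_of_adjTensor_ne_zero hC hG1) hadm]
    by_contra h
    exact hadm (injective_and_subsingleton_of_adjTensor_ne_zero hC hHC h)
  rcases forall_isRight_or_exists_isLeft hadm.2 with hi | ⟨s₀, x, hx, hi⟩
  · rw [← conjTensor, conjTensor_fromBlocks_of_forall_isRight hi,
      adjTensor_switch_of_forall_isRight hSw hH hCD hC hi]
  set S := (univ.erase s₀).image i with hSdef
  have hSD : S ⊆ D := image_erase_subset hDr hi
  have hG y : insert (Sum.inl y) S ∈ G ↔ Sum.inl y ∈ N S := by
    have hyS : Sum.inl y ∉ S := fun h => by simpa using (hDr _).1 (hSD h)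
    simp [hN, hyS]
  rw [← conjTensor, conjTensor_fromBlocks_of_isRight_of_ne hx hi]
  conv_lhs => rw [← Function.update_eq_self s₀ i, hx]
  simp only [adjTensor_switch_update_inl hSw hH hCD hC hDr (by rw [Fintype.card_fin]) hadm.1 hi,
    adjTensor_update_inl hadm.1 hi, ← hSdef, hG]
  rw [switchMatrix_mulVec_indicator_mem (Nat.one_le_iff_ne_zero.1 ht) hC₁ hC₂
    (hG2 S hSD (by rw [card_image_of_injective _ hadm.1]; simp))]

/-- E-WQH switching: the adjacency tensor of the switched hypergraph H equals the
conjugation of the adjacency tensor of G by the orthogonal block matrix Q. -/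
theorem EWQH_switching (k t d : ℕ) (hk : 2 ≤ k) (ht : 1 ≤ t)
    (G H : Finset (Finset ((Fin t ⊕ Fin t) ⊕ Fin d)))
    (C₁ C₂ D : Finset ((Fin t ⊕ Fin t) ⊕ Fin d))
    (hC₁ : C₁ = Finset.univ.image
      (fun a : Fin t => (Sum.inl (Sum.inl a) : (Fin t ⊕ Fin t) ⊕ Fin d)))
    (hC₂ : C₂ = Finset.univ.image
      (fun a : Fin t => (Sum.inl (Sum.inr a) : (Fin t ⊕ Fin t) ⊕ Fin d)))
    (hD : D = Finset.univ.image
      (fun b : Fin d => (Sum.inr b : (Fin t ⊕ Fin t) ⊕ Fin d)))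
    -- G is k-uniform
    (hGk : ∀ e ∈ G, e.card = k)
    -- every edge has at most one vertex in C₁ ∪ C₂
    (hG1 : ∀ e ∈ G, (e ∩ (C₁ ∪ C₂)).card ≤ 1)
    -- N S is the neighbourhood Γ(S) in G
    (N : Finset ((Fin t ⊕ Fin t) ⊕ Fin d) → Finset ((Fin t ⊕ Fin t) ⊕ Fin d))
    (hN : ∀ S, N S = Finset.univ.filter (fun u => u ∉ S ∧ insert u S ∈ G))
    -- neighbourhood condition for (k-1)-subsets of D
    (hG2 : ∀ S ⊆ D, S.card = k - 1 →
      (N S ∩ (C₁ ∪ C₂) = C₁ ∨ N S ∩ (C₁ ∪ C₂) = C₂ ∨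
        (N S ∩ C₁).card = (N S ∩ C₂).card))
    -- Sw e: the k-set e is one whose adjacency is switched
    (Sw : Finset ((Fin t ⊕ Fin t) ⊕ Fin d) → Prop)
    (hSw : ∀ e, Sw e ↔ ∃ v ∈ C₁ ∪ C₂, ∃ S ⊆ D, S.card = k - 1 ∧ e = insert v S ∧
      (N S ∩ (C₁ ∪ C₂) = C₁ ∨ N S ∩ (C₁ ∪ C₂) = C₂))
    -- H is obtained from G by the switching
    (hH : ∀ e, e ∈ H ↔ ((e ∈ G ∧ ¬ Sw e) ∨ (e ∉ G ∧ Sw e)))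
    (J : Matrix (Fin t) (Fin t) ℝ) (hJ : ∀ a b, J a b = 1)
    (Q : Matrix ((Fin t ⊕ Fin t) ⊕ Fin d) ((Fin t ⊕ Fin t) ⊕ Fin d) ℝ)
    (hQ : Q = fromBlocks
      (fromBlocks (1 - (t : ℝ)⁻¹ • J) ((t : ℝ)⁻¹ • J) ((t : ℝ)⁻¹ • J) (1 - (t : ℝ)⁻¹ • J))
      0 0 1)
    -- adjacency tensors of G and H
    (AG AH : (Fin k → (Fin t ⊕ Fin t) ⊕ Fin d) → ℝ)
    (hAG : ∀ i, AG i = if Function.Injective i ∧ Finset.image i Finset.univ ∈ G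
      then (1 : ℝ) / (Nat.factorial (k - 1)) else 0)
    (hAH : ∀ i, AH i = if Function.Injective i ∧ Finset.image i Finset.univ ∈ H
      then (1 : ℝ) / (Nat.factorial (k - 1)) else 0) :
    ∀ i : Fin k → (Fin t ⊕ Fin t) ⊕ Fin d,
      AH i = ∑ j : Fin k → (Fin t ⊕ Fin t) ⊕ Fin d, AG j * ∏ s, Q (i s) (j s) :=
  EWQH_switching_general k t d ht G H C₁ C₂ D hC₁ hC₂ hD hG1 N hN hG2 Sw hSw hH J hJ Q hQ AG AH hAG
    hAH
end SwitchMatrix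
end
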